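/- arXiv:1709.00238 — 2 statements merged into one kernel-verified Lean document; each statement's English description precedes it below -/
import Mathlib

section
/- For a function f holomorphic on the punctured unit disk belonging to A²(𝔻*, |z|²) with Laurent expansion f(z) = Σ_{k≥-1} a_k z^k, the coefficient a_1 satisfies |a_1| ≤ (5/(2π)) ∫_{𝔻*} |f(z)| |z|² dA(z). -/
/-!
Pairing `f` with the weight `conj z * ‖z‖`, of modulus `‖z‖ ^ 2`, isolates `a 1`: in polar
coordinates `z ^ k * (conj z * ‖z‖) dA` becomes `ρ ^ (k + 3) e^{i(k-1)θ} dρ dθ`, whose angular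
integral vanishes unless `k = 1`. On an annulus `r < ‖z‖ < R` with `0 < r` the Laurent series is
dominated by `∑ ‖a k‖ (r ^ k + R ^ k)`, so it may be integrated term by term, giving
`a 1 * 2π (R ^ 5 - r ^ 5) / 5`. Since `f ‖z‖` is square integrable on the punctured disk,
`f z * (conj z * ‖z‖)` is integrable there, and exhausting the disk by annuli yields
`∫ f z * (conj z * ‖z‖) = 2π a 1 / 5`. Taking norms gives the bound.
-/

open MeasureTheory Complex Real Set Filter Topology ComplexConjugate

def annulus (r R : ℝ) : Set ℂ := {z | r < ‖z‖ ∧ ‖z‖ < R}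

lemma measurableSet_annulus (r R : ℝ) : MeasurableSet (annulus r R) :=
  (isOpen_Ioo.preimage continuous_norm).measurableSet

lemma volume_annulus_lt_top (r R : ℝ) : volume (annulus r R) < ⊤ :=
  (measure_mono fun z hz => by simpa using hz.2).trans_lt
    (measure_ball_lt_top (x := (0 : ℂ)) (r := R))

lemma annulus_mono {r r' R R' : ℝ} (hr : r' ≤ r) (hR : R ≤ R') :
    annulus r R ⊆ annulus r' R' :=
  fun _ hz => ⟨hr.trans_lt hz.1, hz.2.trans_le hR⟩

lemma zpow_le_zpow_add_zpow {r x R : ℝ} (hr : 0 < r) (hrx : r ≤ x) (hxR : x ≤ R) (k : ℤ) :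
    x ^ k ≤ r ^ k + R ^ k := by
  rcases le_total 0 k with hk | hk
  · linarith [zpow_le_zpow_left₀ hk (hr.le.trans hrx) hxR, zpow_pos hr k]
  · have : x ^ k ≤ r ^ k := by
      rw [← neg_neg k, zpow_neg x, zpow_neg r]
      exact inv_anti₀ (zpow_pos hr _) (zpow_le_zpow_left₀ (neg_nonneg.2 hk) hr.le hrx)
    linarith [zpow_pos (hr.trans_le (hrx.trans hxR)) k]

lemma integral_exp_int_mul_I (m : ℤ) :
    ∫ θ in Ioo (-π) π, cexp (m * θ * I) = if m = 0 then (2 * π : ℂ) else 0 := by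
  rw [← integral_Ioc_eq_integral_Ioo, ← intervalIntegral.integral_of_le (by linarith [pi_pos])]
  split_ifs with hm
  · simp [hm, two_mul]
  · have hc : (m : ℂ) * I ≠ 0 := by simp [hm]
    simp_rw [mul_right_comm _ _ I]
    rw [integral_exp_mul_complex hc, div_eq_zero_iff, sub_eq_zero]
    left
    rw [exp_eq_exp_iff_exists_int]
    exact ⟨m, by push_cast; ring⟩

lemma setIntegral_annulus_eq_polar {E : Type*} [NormedAddCommGroup E] [NormedSpace ℝ E]
    (g : ℂ → E) {r : ℝ} (hr : 0 ≤ r) (R : ℝ) :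
    ∫ z in annulus r R, g z =
      ∫ p in Ioo r R ×ˢ Ioo (-π) π, p.1 • g (Complex.polarCoord.symm p) := by
  have hpolar : ∀ p ∈ polarCoord.target,
      p.1 • (annulus r R).indicator g (Complex.polarCoord.symm p) =
        (Ioo r R ×ˢ univ).indicator (fun p => p.1 • g (Complex.polarCoord.symm p)) p := by
    rintro ⟨ρ, θ⟩ ⟨hρ, -⟩
    have : Complex.polarCoord.symm (ρ, θ) ∈ annulus r R ↔ (ρ, θ) ∈ Ioo r R ×ˢ univ := by
      simp [annulus, abs_of_pos (show 0 < ρ from hρ)]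
    by_cases h : (ρ, θ) ∈ Ioo r R ×ˢ univ
    · rw [indicator_of_mem (this.2 h), indicator_of_mem h]
    · rw [indicator_of_notMem (mt this.1 h), indicator_of_notMem h, smul_zero]
  rw [← integral_indicator (measurableSet_annulus r R), ← Complex.integral_comp_polarCoord_symm,
    setIntegral_congr_fun polarCoord.open_target.measurableSet hpolar,
    setIntegral_indicator (measurableSet_Ioo.prod MeasurableSet.univ)]
  congr 2
  ext ⟨ρ, θ⟩
  simp only [polarCoord_target, mem_inter_iff, mem_prod, mem_Ioi, mem_Ioo, mem_univ, and_true]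
  exact ⟨fun ⟨⟨_, hθ⟩, hρ⟩ => ⟨hρ, hθ⟩, fun ⟨hρ, hθ⟩ => ⟨⟨hr.trans_lt hρ.1, hθ⟩, hρ⟩⟩

lemma smul_zpow_mul_conj_mul_norm_polarCoord_symm (k : ℤ) {ρ : ℝ} (θ : ℝ) (hρ : 0 < ρ) :
    ρ • (Complex.polarCoord.symm (ρ, θ) ^ k *
        (conj (Complex.polarCoord.symm (ρ, θ)) * ‖Complex.polarCoord.symm (ρ, θ)‖)) =
      (ρ : ℂ) ^ (k + 3) * cexp ((k - 1 : ℤ) * θ * I) := by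
  have hz : Complex.polarCoord.symm (ρ, θ) = ρ * cexp (θ * I) := by
    simp [Complex.polarCoord_symm_apply, exp_mul_I, ← ofReal_cos, ← ofReal_sin]
  have hρ' : (ρ : ℂ) ≠ 0 := ofReal_ne_zero.2 hρ.ne'
  rw [hz, norm_mul, norm_exp_ofReal_mul_I, norm_real, Real.norm_of_nonneg hρ.le, real_smul,
    map_mul, conj_ofReal, ← exp_conj, map_mul, conj_ofReal, conj_I, mul_zpow, ← exp_int_mul,
    zpow_add₀ hρ']
  have : cexp (k * (θ * I)) = cexp ((k - 1 : ℤ) * θ * I) * cexp (θ * I) := by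
    rw [← Complex.exp_add]; push_cast; ring_nf
  rw [this, mul_neg, Complex.exp_neg]
  field_simp

lemma setIntegral_annulus_zpow_mul_conj_mul_norm (k : ℤ) {r R : ℝ} (hr : 0 ≤ r) (hrR : r ≤ R) :
    ∫ z in annulus r R, z ^ k * (conj z * ‖z‖) =
      if k = 1 then ((2 * π * (R ^ 5 - r ^ 5) / 5 : ℝ) : ℂ) else 0 := by
  rw [setIntegral_annulus_eq_polar _ hr,
    setIntegral_congr_fun (measurableSet_Ioo.prod measurableSet_Ioo)
      (fun p hp => smul_zpow_mul_conj_mul_norm_polarCoord_symm k p.2 (hr.trans_lt hp.1.1)),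
    Measure.volume_eq_prod,
    setIntegral_prod_mul (fun ρ : ℝ => (ρ : ℂ) ^ (k + 3)) (fun θ : ℝ => cexp ((k - 1 : ℤ) * θ * I)),
    integral_exp_int_mul_I]
  rcases eq_or_ne k 1 with rfl | hk
  · have h_pow : ∀ x : ℝ, (x : ℂ) ^ ((1 : ℤ) + 3) = ((x ^ 4 : ℝ) : ℂ) := fun x => by
      push_cast; norm_num
    rw [if_pos (sub_self 1), if_pos rfl]
    simp_rw [h_pow]
    rw [← integral_Ioc_eq_integral_Ioo,
      ← intervalIntegral.integral_of_le hrR, intervalIntegral.integral_ofReal, integral_pow]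
    push_cast; ring
  · rw [if_neg (sub_ne_zero.2 hk), if_neg hk, mul_zero]

lemma summable_norm_mul_zpow {a : ℤ → ℂ} {x : ℝ} (hx : 0 ≤ x)
    (h : Summable fun k => a k * (x : ℂ) ^ k) : Summable fun k => ‖a k‖ * x ^ k := by
  simpa [abs_of_nonneg hx] using summable_norm_iff.2 h

lemma hasSum_setIntegral_annulus_mul {f g : ℂ → ℂ} {a : ℤ → ℂ} {r R C : ℝ} (hr : 0 < r)
    (hsr : Summable fun k => ‖a k‖ * r ^ k) (hsR : Summable fun k => ‖a k‖ * R ^ k)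
    (hf : ∀ z ∈ annulus r R, HasSum (fun k => a k * z ^ k) (f z))
    (hg : AEStronglyMeasurable g (volume.restrict (annulus r R)))
    (hgC : ∀ z ∈ annulus r R, ‖g z‖ ≤ C) :
    HasSum (fun k => a k * ∫ z in annulus r R, z ^ k * g z) (∫ z in annulus r R, f z * g z) := by
  set A := annulus r R
  set F : ℤ → ℂ → ℂ := fun k z => a k * z ^ k * g z
  set M : ℤ → ℝ := fun k => (‖a k‖ * r ^ k + ‖a k‖ * R ^ k) * C
  have hF_le : ∀ k, ∀ z ∈ A, ‖F k z‖ ≤ M k := fun k z hz => by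
    simp only [F, M, norm_mul, norm_zpow, ← mul_add]
    have h_pow := mul_le_mul_of_nonneg_left (zpow_le_zpow_add_zpow hr hz.1.le hz.2.le k)
      (norm_nonneg (a k))
    exact mul_le_mul h_pow (hgC z hz) (norm_nonneg _)
      ((mul_nonneg (norm_nonneg _) (zpow_nonneg (norm_nonneg z) k)).trans h_pow)
  have hF_int : ∀ k, Integrable (F k) (volume.restrict A) := fun k =>
    IntegrableOn.of_bound (volume_annulus_lt_top r R)
      ((aestronglyMeasurable_const.mul (by fun_prop)).mul hg) (M k)
      ((ae_restrict_mem (measurableSet_annulus r R)).mono (hF_le k))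
  have hM : Summable fun k => M k * volume.real A :=
    ((hsr.add hsR).mul_right C).mul_right _
  have hF_norm : Summable fun k => ∫ z in A, ‖F k z‖ :=
    hM.of_norm_bounded fun k => by
      simpa using norm_setIntegral_le_of_norm_le_const (volume_annulus_lt_top r R)
        fun z hz => (norm_norm (F k z)).trans_le (hF_le k z hz)
  have h := hasSum_integral_of_summable_integral_norm hF_int hF_norm
  rw [setIntegral_congr_fun (measurableSet_annulus r R)
    fun z hz => ((hf z hz).mul_right (g z)).tsum_eq] at h
  simpa only [F, mul_assoc, integral_const_mul] using h

lemma setIntegral_annulus_mul_conj_mul_norm {f : ℂ → ℂ} {a : ℤ → ℂ} {r R : ℝ} (hr : 0 < r)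
    (hrR : r ≤ R) (hsr : Summable fun k => a k * (r : ℂ) ^ k)
    (hsR : Summable fun k => a k * (R : ℂ) ^ k)
    (hf : ∀ z ∈ annulus r R, HasSum (fun k => a k * z ^ k) (f z)) :
    ∫ z in annulus r R, f z * (conj z * ‖z‖) = a 1 * ((2 * π * (R ^ 5 - r ^ 5) / 5 : ℝ) : ℂ) := by
  have hg_le : ∀ z ∈ annulus r R, ‖conj z * (‖z‖ : ℂ)‖ ≤ R ^ 2 := fun z hz => by
    rw [norm_mul, Complex.norm_conj, norm_real, norm_norm, ← sq]
    exact pow_le_pow_left₀ (norm_nonneg z) hz.2.le 2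
  have h := hasSum_setIntegral_annulus_mul hr (summable_norm_mul_zpow hr.le hsr)
    (summable_norm_mul_zpow (hr.le.trans hrR) hsR) hf (by fun_prop) hg_le
  rw [← h.tsum_eq, tsum_eq_single 1 fun k hk => by
    rw [setIntegral_annulus_zpow_mul_conj_mul_norm k hr.le hrR, if_neg hk, mul_zero],
    setIntegral_annulus_zpow_mul_conj_mul_norm 1 hr.le hrR, if_pos rfl]

lemma integrableOn_mul_conj_mul_norm {f : ℂ → ℂ} (hf : ContinuousOn f (annulus 0 1))
    (hL2 : Integrable (fun z => ‖f z‖ ^ 2 * ‖z‖ ^ 2) (volume.restrict (annulus 0 1))) :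
    IntegrableOn (fun z => f z * (conj z * ‖z‖)) (annulus 0 1) := by
  refine ((hL2.add (integrableOn_const (C := (1 : ℝ)) (volume_annulus_lt_top 0 1).ne)).div_const
    2).mono' ((hf.mul (by fun_prop)).aestronglyMeasurable (measurableSet_annulus 0 1)) ?_
  filter_upwards [ae_restrict_mem (measurableSet_annulus 0 1)] with z hz
  have : ‖f z‖ * ‖z‖ ^ 2 ≤ ‖f z‖ * ‖z‖ :=
    mul_le_mul_of_nonneg_left (by nlinarith [norm_nonneg z, hz.2]) (norm_nonneg _)
  simp only [Pi.add_apply, norm_mul, Complex.norm_conj, norm_real, norm_norm, ← sq]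
  nlinarith [sq_nonneg (‖f z‖ * ‖z‖ - 1)]

lemma iUnion_annulus_of_tendsto_zero {δ : ℕ → ℝ} (hδ0 : ∀ n, 0 ≤ δ n)
    (hδ : Tendsto δ atTop (𝓝 0)) : ⋃ n, annulus (δ n) (1 - δ n) = annulus 0 1 := by
  ext z
  refine ⟨fun hz => ?_, fun ⟨hz0, hz1⟩ => ?_⟩
  · obtain ⟨n, hn⟩ := mem_iUnion.1 hz
    exact annulus_mono (hδ0 n) (by linarith [hδ0 n]) hn
  · obtain ⟨n, hn0, hn1⟩ := ((hδ.eventually (gt_mem_nhds hz0)).and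
      (hδ.eventually (gt_mem_nhds (sub_pos.2 hz1)))).exists
    exact mem_iUnion.2 ⟨n, hn0, by linarith⟩

lemma tendsto_setIntegral_annulus_one_sub {E : Type*} [NormedAddCommGroup E] [NormedSpace ℝ E]
    {g : ℂ → E} {δ : ℕ → ℝ} (hδ0 : ∀ n, 0 ≤ δ n) (hδ_anti : Antitone δ)
    (hδ : Tendsto δ atTop (𝓝 0)) (hg : IntegrableOn g (annulus 0 1)) :
    Tendsto (fun n => ∫ z in annulus (δ n) (1 - δ n), g z) atTop
      (𝓝 (∫ z in annulus 0 1, g z)) := by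
  have hmono : Monotone fun n => annulus (δ n) (1 - δ n) := fun m n hmn =>
    annulus_mono (hδ_anti hmn) (by linarith [hδ_anti hmn])
  rw [← iUnion_annulus_of_tendsto_zero hδ0 hδ] at hg ⊢
  exact tendsto_setIntegral_of_monotone (fun n => measurableSet_annulus _ _) hmono hg

lemma ofReal_mem_annulus {r R x : ℝ} (hx : 0 ≤ x) : (x : ℂ) ∈ annulus r R ↔ x ∈ Ioo r R := by
  simp [annulus, abs_of_nonneg hx]

lemma setIntegral_punctured_disk_mul_conj_mul_norm {f : ℂ → ℂ} {a : ℤ → ℂ}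
    (hf : ContinuousOn f (annulus 0 1))
    (hL2 : Integrable (fun z => ‖f z‖ ^ 2 * ‖z‖ ^ 2) (volume.restrict (annulus 0 1)))
    (hsum : ∀ z ∈ annulus 0 1, HasSum (fun k => a k * z ^ k) (f z)) :
    ∫ z in annulus 0 1, f z * (conj z * ‖z‖) = a 1 * ((2 * π / 5 : ℝ) : ℂ) := by
  set δ : ℕ → ℝ := fun n => 2⁻¹ ^ (n + 1)
  have hδ0 : ∀ n, 0 < δ n := fun n => by positivity
  have hδ1 : ∀ n, δ n ≤ 2⁻¹ := fun n =>
    pow_le_of_le_one (by norm_num) (by norm_num) n.succ_ne_zero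
  have hδ_anti : Antitone δ := fun m n hmn =>
    pow_le_pow_of_le_one (by norm_num) (by norm_num) (by omega)
  have hδ : Tendsto δ atTop (𝓝 0) :=
    (tendsto_pow_atTop_nhds_zero_of_lt_one (by norm_num) (by norm_num)).comp
      (tendsto_add_atTop_nat 1)
  have h_eq : ∀ n, ∫ z in annulus (δ n) (1 - δ n), f z * (conj z * ‖z‖) =
      a 1 * ((2 * π * ((1 - δ n) ^ 5 - δ n ^ 5) / 5 : ℝ) : ℂ) := fun n =>
    setIntegral_annulus_mul_conj_mul_norm (hδ0 n) (by linarith [hδ1 n])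
      (hsum _ ((ofReal_mem_annulus (hδ0 n).le).2 ⟨hδ0 n, by linarith [hδ1 n]⟩)).summable
      (hsum _ ((ofReal_mem_annulus (by linarith [hδ1 n])).2
        ⟨by linarith [hδ1 n], by linarith [hδ0 n]⟩)).summable
      fun z hz => hsum z (annulus_mono (hδ0 n).le (by linarith [hδ0 n]) hz)
  refine tendsto_nhds_unique (tendsto_setIntegral_annulus_one_sub (fun n => (hδ0 n).le) hδ_anti
    hδ (integrableOn_mul_conj_mul_norm hf hL2)) ?_
  simp only [h_eq]
  refine tendsto_const_nhds.mul (continuous_ofReal.continuousAt.tendsto.comp ?_)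
  simpa using ((((tendsto_const_nhds (x := (1 : ℝ)).sub hδ).pow 5).sub (hδ.pow 5)).const_mul
    (2 * π)).div_const 5

theorem stmt_2_general (D : Set ℂ) (hD : D = {z : ℂ | 0 < ‖z‖ ∧ ‖z‖ < 1})
    (f : ℂ → ℂ) (a : ℤ → ℂ)
    (hf : DifferentiableOn ℂ f D)
    (hL2 : Integrable (fun z => ‖f z‖ ^ 2 * ‖z‖ ^ 2) (volume.restrict D))
    (hsum : ∀ z ∈ D, HasSum (fun k : ℤ => a k * z ^ k) (f z)) :
    ‖a (1)‖ ≤ (5 / (2 * π)) * ∫ z in D, ‖f z‖ * ‖z‖ ^ 2 := by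
  obtain rfl : D = annulus 0 1 := hD
  have h_int := setIntegral_punctured_disk_mul_conj_mul_norm hf.continuousOn hL2 hsum
  have h_bound : ‖a 1‖ * (2 * π / 5) ≤ ∫ z in annulus 0 1, ‖f z‖ * ‖z‖ ^ 2 := by
    calc ‖a 1‖ * (2 * π / 5) = ‖∫ z in annulus 0 1, f z * (conj z * ‖z‖)‖ := by
          rw [h_int, norm_mul, norm_real, Real.norm_of_nonneg (by positivity)]
      _ ≤ ∫ z in annulus 0 1, ‖f z * (conj z * ‖z‖)‖ := norm_integral_le_integral_norm _
      _ = ∫ z in annulus 0 1, ‖f z‖ * ‖z‖ ^ 2 := by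
          simp only [norm_mul, Complex.norm_conj, norm_real, norm_norm, sq]
  rw [div_mul_eq_mul_div, le_div_iff₀ (by positivity)]
  linarith

/-- Coefficient bound for Laurent coefficient of functions in the weighted
Bergman space $A^2(\mathbb{D}^*, |z|^2)$. -/
theorem stmt_2 (D : Set ℂ) (hD : D = {z : ℂ | 0 < ‖z‖ ∧ ‖z‖ < 1})
    (f : ℂ → ℂ) (a : ℤ → ℂ)
    (hf : DifferentiableOn ℂ f D)
    (hL2 : Integrable (fun z => ‖f z‖ ^ 2 * ‖z‖ ^ 2) (volume.restrict D))
    (ha : ∀ k : ℤ, k < -1 → a k = 0)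
    (hsum : ∀ z ∈ D, HasSum (fun k : ℤ => a k * z ^ k) (f z)) :
    ‖a (1)‖ ≤ (5 / (2 * π)) * ∫ z in D, ‖f z‖ * ‖z‖ ^ 2 :=
  stmt_2_general D hD f a hf hL2 hsum
end

section
/- Let f be a bounded holomorphic function on ℍ_∞ = {(z₁,z₂) : |z₁| < e^{-1/|z₂|}, 0 < |z₂| < 1} with Laurent coefficients a_{(0,α₂)} (α₂ ∈ ℤ) in z₂ of the slice z₁ = 0 direction. Then for every α₂ ∈ ℤ, |a_{(0,α₂)}| ≤ C·(Ĩ(α₂+1))^{-1}·‖f‖_{L^∞}, where Ĩ(x) = ∫₀¹ r^x e^{-2/r} dr and C is an absolute constant. -/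
/-!
On the slice `z₁ = 0` the expansion of `f` reduces to the Laurent series
`Σ_{n ∈ ℤ} a_{(0,n)} z₂ⁿ`, convergent and bounded by `M` on the punctured unit disc.
The Cauchy estimate on the circle `|z₂| = r` gives `|a_{(0,n)}| rⁿ ≤ M` for every `r ∈ (0, 1)`.
Letting `r → 0` kills the coefficients with `n < 0`, and letting `r → 1` gives `|a_{(0,n)}| ≤ M`
for `n ≥ 0`; since `0 < Ĩ(x) ≤ 1` for `x ≥ 0`, the bound holds with `C = 1`.
-/

open MeasureTheory Complex Real Metric Filter Topology

theorem hasSum_circleIntegral_of_summable_bound {E ι : Type*} [NormedAddCommGroup E]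
    [NormedSpace ℂ E] [CompleteSpace E] [Countable ι] {F : ι → ℂ → E} {g : ℂ → E} {c : ℂ} {R : ℝ}
    (hF : ∀ i, CircleIntegrable (F i) c R) (bound : ι → ℝ)
    (h_bound : ∀ i, ∀ z ∈ sphere c |R|, ‖F i z‖ ≤ bound i) (h_summable : Summable bound)
    (h_lim : ∀ z ∈ sphere c |R|, HasSum (fun i => F i z) (g z)) :
    HasSum (fun i => ∮ z in C(c, R), F i z) (∮ z in C(c, R), g z) := by
  refine intervalIntegral.hasSum_integral_of_dominated_convergence (fun i _ => |R| * bound i)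
    (fun i => (hF i).out.def'.aestronglyMeasurable) (fun i => ?_)
    (.of_forall fun _ _ => h_summable.mul_left _) intervalIntegrable_const
    (.of_forall fun θ _ => (h_lim _ (circleMap_mem_sphere' c R θ)).const_smul _)
  refine .of_forall fun θ _ => ?_
  simpa [norm_smul] using
    mul_le_mul_of_nonneg_left (h_bound i _ (circleMap_mem_sphere' c R θ)) (abs_nonneg R)

theorem circleIntegral_zpow_mul_of_hasSum_laurent {a : ℤ → ℂ} {g : ℂ → ℂ} {R : ℝ} (hR : 0 < R)
    (hg : ∀ z ∈ sphere (0 : ℂ) R, HasSum (fun n => a n * z ^ n) (g z)) (m : ℤ) :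
    (∮ z in C(0, R), z ^ (-m - 1) * g z) = 2 * π * I * a m := by
  have hR' : |R| = R := abs_of_pos hR
  -- A Laurent series converging unconditionally at `R` converges absolutely there.
  have hnorm : Summable fun n => ‖a n‖ * R ^ (n + (-m - 1)) := by
    have := ((hg R (by simp [hR.le])).summable.norm).mul_right (R ^ (-m - 1))
    simpa [norm_zpow, hR', zpow_add₀ hR.ne', mul_assoc] using this
  have hterm (n : ℤ) : (∮ z in C(0, R), a n * z ^ (n + (-m - 1))) =
      if n = m then 2 * π * I * a m else 0 := by
    rw [circleIntegral.integral_const_mul]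
    split_ifs with h
    · have hexp : n + (-m - 1) = -1 := by omega
      simp_rw [hexp, zpow_neg_one]
      have := circleIntegral.integral_sub_center_inv 0 hR.ne'
      simp only [sub_zero] at this
      rw [this, h]
      ring
    · simpa using
        Or.inr (circleIntegral.integral_sub_zpow_of_ne (n := n + (-m - 1)) (by omega) 0 0 R)
  have hsum := hasSum_circleIntegral_of_summable_bound (F := fun n z => a n * z ^ (n + (-m - 1)))
    (g := fun z => z ^ (-m - 1) * g z) (c := 0) (R := R) (fun n => ?_) _ (fun n z hz => ?_) hnorm
    (fun z hz => ?_)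
  · simp_rw [hterm] at hsum
    exact hsum.unique (hasSum_ite_eq m _)
  · refine ContinuousOn.circleIntegrable hR.le
      (continuousOn_const.mul (continuousOn_id.zpow₀ _ fun z hz => Or.inl ?_))
    exact ne_zero_of_mem_sphere hR.ne' ⟨z, hz⟩
  · rw [hR', mem_sphere_zero_iff_norm] at hz
    simp [norm_zpow, hz]
  · rw [hR'] at hz
    have hz0 : z ≠ 0 := ne_zero_of_mem_sphere hR.ne' ⟨z, hz⟩
    simpa [zpow_add₀ hz0, mul_comm, mul_assoc] using (hg z hz).mul_right (z ^ (-m - 1))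

theorem norm_mul_zpow_le_of_hasSum_laurent {a : ℤ → ℂ} {g : ℂ → ℂ} {R M : ℝ} (hR : 0 < R)
    (hg : ∀ z ∈ sphere (0 : ℂ) R, HasSum (fun n => a n * z ^ n) (g z))
    (hM : ∀ z ∈ sphere (0 : ℂ) R, ‖g z‖ ≤ M) (m : ℤ) : ‖a m‖ * R ^ m ≤ M := by
  have h := circleIntegral.norm_integral_le_of_norm_le_const hR.le
    (f := fun z => z ^ (-m - 1) * g z) (C := R ^ (-m - 1) * M) fun z hz => by
      rw [norm_mul, norm_zpow, mem_sphere_zero_iff_norm.1 hz]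
      exact mul_le_mul_of_nonneg_left (hM z hz) (by positivity)
  rw [circleIntegral_zpow_mul_of_hasSum_laurent hR hg m] at h
  have hpow : R * R ^ (-m - 1) = (R ^ m)⁻¹ := by
    rw [← zpow_one_add₀ hR.ne', ← zpow_neg]; ring_nf
  have h2pi : ‖2 * π * I * a m‖ = 2 * π * ‖a m‖ := by simp [abs_of_pos pi_pos]
  rw [h2pi, mul_assoc (2 * π), ← mul_assoc R, hpow] at h
  have := le_of_mul_le_mul_left h two_pi_pos
  rwa [inv_mul_eq_div, le_div_iff₀ (by positivity)] at this

theorem le_of_forall_mul_zpow_le {a M : ℝ} {m : ℤ} (h : ∀ r ∈ Set.Ioo (0 : ℝ) 1, a * r ^ m ≤ M) :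
    a ≤ M := by
  have hlim : Tendsto (fun r : ℝ => a * r ^ m) (𝓝[<] 1) (𝓝 a) := by
    simpa using ((continuousAt_zpow₀ (1 : ℝ) m (Or.inl one_ne_zero)).tendsto.mono_left
      nhdsWithin_le_nhds).const_mul a
  refine le_of_tendsto hlim ?_
  filter_upwards [Ioo_mem_nhdsLT one_pos] with r hr using h r hr

theorem eq_zero_of_forall_mul_zpow_le {a M : ℝ} {m : ℤ} (hm : m < 0) (ha : 0 ≤ a)
    (h : ∀ r ∈ Set.Ioo (0 : ℝ) 1, a * r ^ m ≤ M) : a = 0 := by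
  refine ha.antisymm' (not_lt.1 fun ha0 => ?_)
  have hlim : Tendsto (fun r : ℝ => a * r ^ m) (𝓝[>] 0) atTop := by
    refine Tendsto.const_mul_atTop ha0 ?_
    refine ((tendsto_zpow_atTop_atTop (neg_pos.2 hm)).comp tendsto_inv_nhdsGT_zero).congr' ?_
    filter_upwards [self_mem_nhdsWithin] with r hr
    simp [zpow_neg, inv_zpow']
  obtain ⟨r, hgt, hr⟩ := ((hlim.eventually_gt_atTop M).and (Ioo_mem_nhdsGT one_pos)).exists
  exact (h r hr).not_gt hgt

theorem norm_rpow_mul_exp_neg_two_div_le_one {x r : ℝ} (hx : 0 ≤ x) (hr : r ∈ Set.Ioc 0 1) :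
    ‖r ^ x * Real.exp (-2 / r)‖ ≤ 1 := by
  rw [norm_mul, norm_of_nonneg (rpow_nonneg hr.1.le x), Real.norm_of_nonneg (exp_nonneg _)]
  exact mul_le_one₀ (rpow_le_one hr.1.le hr.2 hx) (exp_nonneg _)
    (exp_le_one_iff.2 (div_nonpos_of_nonpos_of_nonneg (by norm_num) hr.1.le))

theorem integrableOn_rpow_mul_exp_neg_two_div {x : ℝ} (hx : 0 ≤ x) :
    IntegrableOn (fun r : ℝ => r ^ x * Real.exp (-2 / r)) (Set.Ioc 0 1) :=
  Measure.integrableOn_of_bounded (M := 1) (by simp) (by fun_prop)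
    ((ae_restrict_iff' measurableSet_Ioc).2
      (.of_forall fun _ => norm_rpow_mul_exp_neg_two_div_le_one hx))

theorem setIntegral_rpow_mul_exp_neg_two_div_pos {x : ℝ} (hx : 0 ≤ x) :
    0 < ∫ r in Set.Ioc (0 : ℝ) 1, r ^ x * Real.exp (-2 / r) := by
  rw [← intervalIntegral.integral_of_le zero_le_one]
  refine intervalIntegral.intervalIntegral_pos_of_pos_on ?_ (fun r hr => ?_) one_pos
  · exact (intervalIntegrable_iff_integrableOn_Ioc_of_le zero_le_one).2
      (integrableOn_rpow_mul_exp_neg_two_div hx)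
  · exact mul_pos (rpow_pos_of_pos hr.1 x) (exp_pos _)

theorem setIntegral_rpow_mul_exp_neg_two_div_le_one {x : ℝ} (hx : 0 ≤ x) :
    ∫ r in Set.Ioc (0 : ℝ) 1, r ^ x * Real.exp (-2 / r) ≤ 1 := by
  have h := norm_setIntegral_le_of_norm_le_const (μ := volume) (by simp)
    fun r => norm_rpow_mul_exp_neg_two_div_le_one (x := x) (r := r) hx
  exact (Real.le_norm_self _).trans (h.trans_eq (by simp))

theorem setIntegral_rpow_mul_exp_neg_two_div_nonneg (x : ℝ) :
    0 ≤ ∫ r in Set.Ioc (0 : ℝ) 1, r ^ x * Real.exp (-2 / r) :=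
  setIntegral_nonneg measurableSet_Ioc fun _ hr => mul_nonneg (rpow_nonneg hr.1.le x) (exp_nonneg _)

theorem hasSum_zero_fst_iff {K : Type*} [DivisionRing K] [TopologicalSpace K] (a : ℕ × ℤ → K)
    (w s : K) :
    HasSum (fun α : ℕ × ℤ => a α * (0 : K) ^ α.1 * w ^ α.2) s ↔
      HasSum (fun n : ℤ => a (0, n) * w ^ n) s := by
  have hinj : Function.Injective fun n : ℤ => ((0, n) : ℕ × ℤ) := fun _ _ h => by
    simpa using h
  refine (hinj.hasSum_iff fun α hα => ?_).symm.trans (by simp [Function.comp_def])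
  have : α.1 ≠ 0 := fun h => hα ⟨α.2, by rw [← h]⟩
  simp [zero_pow this]

def expHartogsTriangle : Set (ℂ × ℂ) :=
  {z : ℂ × ℂ | ‖z.1‖ < Real.exp (-1 / ‖z.2‖) ∧ 0 < ‖z.2‖ ∧ ‖z.2‖ < 1}

theorem zero_mk_mem_expHartogsTriangle {w : ℂ} (h0 : 0 < ‖w‖) (h1 : ‖w‖ < 1) :
    ((0 : ℂ), w) ∈ expHartogsTriangle :=
  ⟨by simpa using exp_pos _, h0, h1⟩

/-- Coefficient bounds on the exponential Hartogs triangle `ℍ_∞`: there is an absolute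
constant `C > 0` such that for every bounded holomorphic `f` on `ℍ_∞` with expansion
`f(z) = Σ_{α₁ ≥ 0, α₂ ∈ ℤ} a_α z₁^{α₁} z₂^{α₂}` and bound `M`, one has
`|a_{(0,α₂)}| ≤ C (Ĩ(α₂+1))⁻¹ M`, where `Ĩ(x) = ∫₀¹ r^x e^{-2/r} dr`. -/
theorem stmt_18 (H : Set (ℂ × ℂ))
    (hH : H = {z : ℂ × ℂ | ‖z.1‖ < Real.exp (-1 / ‖z.2‖) ∧
      0 < ‖z.2‖ ∧ ‖z.2‖ < 1}) :
    ∃ C : ℝ, 0 < C ∧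
      ∀ (f : ℂ × ℂ → ℂ) (a : ℕ × ℤ → ℂ) (M : ℝ),
        DifferentiableOn ℂ f H →
        (∀ z ∈ H, ‖f z‖ ≤ M) →
        (∀ z ∈ H, HasSum (fun α : ℕ × ℤ => a α * z.1 ^ α.1 * z.2 ^ α.2) (f z)) →
        ∀ α₂ : ℤ, ‖a (0, α₂)‖ ≤
          C * (∫ r in Set.Ioc (0 : ℝ) 1, r ^ ((α₂ : ℝ) + 1) * Real.exp (-2 / r))⁻¹ * M := by
  refine ⟨1, one_pos, fun f a M _ hf_le hf_sum α₂ => ?_⟩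
  have hmem (r : ℝ) (hr : r ∈ Set.Ioo (0 : ℝ) 1) (w : ℂ) (hw : w ∈ sphere (0 : ℂ) r) :
      ((0 : ℂ), w) ∈ H := by
    rw [mem_sphere_zero_iff_norm] at hw
    subst hH
    exact zero_mk_mem_expHartogsTriangle (hw ▸ hr.1) (hw ▸ hr.2)
  have hcauchy : ∀ r ∈ Set.Ioo (0 : ℝ) 1, ‖a (0, α₂)‖ * r ^ α₂ ≤ M := fun r hr =>
    norm_mul_zpow_le_of_hasSum_laurent (g := fun w => f (0, w)) hr.1
      (fun w hw => (hasSum_zero_fst_iff a w (f (0, w))).1 (hf_sum (0, w) (hmem r hr w hw)))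
      (fun w hw => hf_le (0, w) (hmem r hr w hw)) α₂
  have hM : 0 ≤ M := (by positivity : 0 ≤ ‖a (0, α₂)‖ * (1 / 2 : ℝ) ^ α₂).trans
    (hcauchy _ ⟨by norm_num, by norm_num⟩)
  rw [one_mul]
  rcases lt_or_ge α₂ 0 with hneg | hnonneg
  · rw [eq_zero_of_forall_mul_zpow_le hneg (norm_nonneg _) hcauchy]
    exact mul_nonneg (inv_nonneg.2 (setIntegral_rpow_mul_exp_neg_two_div_nonneg _)) hM
  · have hx : (0 : ℝ) ≤ α₂ + 1 := by positivity
    have hI : 1 ≤ (∫ r in Set.Ioc (0 : ℝ) 1, r ^ ((α₂ : ℝ) + 1) * Real.exp (-2 / r))⁻¹ :=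
      one_le_inv₀ (setIntegral_rpow_mul_exp_neg_two_div_pos hx) |>.2
        (setIntegral_rpow_mul_exp_neg_two_div_le_one hx)
    exact (le_of_forall_mul_zpow_le hcauchy).trans (le_mul_of_one_le_left hM hI)
end
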